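/- arXiv:2605.07584 — 2 statements merged into one kernel-verified Lean document; each statement's English description precedes it below -/
import Mathlib

section
/- Let a be an action schema with arity k ≥ 2 such that every literal in pre(a) has arity at most 2, and let s be a state. Then there exists a k-clique C = {v_1, ..., v_k} in the substitution consistency graph G_{a,s} (with exactly one vertex per variable of a) if and only if all ground literals ℓ[v_1, ..., v_k] with ℓ ∈ pre(a) hold in s. -/
namespace Planning

/-- A term is either a variable or an object (constant). -/
inductive Term (V O : Type) : Type
  | var : V → Term V O
  | obj : O → Term V O
  deriving DecidableEq

/-- An atom is a predicate symbol applied to a list of terms. -/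
structure Atom (P V O : Type) : Type where
  pred : P
  args : List (Term V O)

variable {P V O : Type}

def Term.isObj : Term V O → Prop
  | .var _ => False
  | .obj _ => True

/-- A ground atom mentions no variables. -/
def Atom.isGround (a : Atom P V O) : Prop := ∀ t ∈ a.args, t.isObj

/-- The (finite) set of variables occurring in an atom; its card is the arity of the literal. -/
def Atom.vars [DecidableEq V] (a : Atom P V O) : Finset V :=
  (a.args.filterMap fun t => match t with
    | Term.var v => some v
    | Term.obj _ => none).toFinset

/-- Two terms match iff one of them is a variable, or they are equal objects. -/
def Term.Matches : Term V O → Term V O → Prop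
  | .var _, _ => True
  | _, .var _ => True
  | .obj o, .obj o' => o = o'

/-- `P(x_1,...,x_n)` matches `P'(x'_1,...,x'_n)` iff `P = P'` and each pair of
corresponding terms matches. -/
def Atom.Matches (a b : Atom P V O) : Prop :=
  a.pred = b.pred ∧ List.Forall₂ Term.Matches a.args b.args

/-- Apply a partial substitution to a term. -/
def Term.subst (σ : V → Option O) : Term V O → Term V O
  | .var v => match σ v with
    | some o => .obj o
    | none => .var v
  | .obj o => .obj o

/-- Apply a partial substitution to an atom. -/
def Atom.subst (σ : V → Option O) (a : Atom P V O) : Atom P V O :=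
  ⟨a.pred, a.args.map (Term.subst σ)⟩

/-- Apply a total substitution `ρ`, yielding the ground atom `a[ρ]`. -/
def Atom.ground (ρ : V → O) (a : Atom P V O) : Atom P V O :=
  a.subst (fun v => some (ρ v))

/-- The partial substitution `[v, v']` induced by two vertices `v = x/o`, `v' = x'/o'`. -/
def pairSub [DecidableEq V] (v v' : V × O) : V → Option O :=
  fun x => if x = v.1 then some v.2 else if x = v'.1 then some v'.2 else none

/-- The partial substitution `[v]` induced by a single vertex `v = x/o`. -/
def singleSub [DecidableEq V] (v : V × O) : V → Option O :=
  fun x => if x = v.1 then some v.2 else none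

/-- An action schema (also used for the body of a Datalog rule): a finite set of
variables `X(a)`, positive precondition atoms and negative precondition atoms. -/
structure Schema (P V O : Type) : Type where
  vars : Finset V
  prePos : Set (Atom P V O)
  preNeg : Set (Atom P V O)

/-- The arity of a schema is `|X(a)|`. -/
def Schema.arity (a : Schema P V O) : ℕ := a.vars.card

/-- `x/o` is a vertex-consistent substitution: the single-vertex analogue of the
edge removal criteria. -/
def consistentVertex [DecidableEq V] (a : Schema P V O) (s : Set (Atom P V O))
    (v : V × O) : Prop :=
  v.1 ∈ a.vars ∧
  (∀ p ∈ a.prePos, ∃ q ∈ s, (p.subst (singleSub v)).Matches q) ∧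
  (∀ p ∈ a.preNeg, p.subst (singleSub v) ∉ s)

/-- `{v, v'}` is an edge of the substitution consistency graph `G_{a,s}`:
the pair is excluded neither by `I^≠` (two objects for one variable), nor by `I^+`
(some positive precondition atom, after applying `[v,v']`, matches no ground atom
of `s`), nor by `I^-` (some negative precondition atom, after applying `[v,v']`,
yields a ground atom contained in `s`). -/
def consistentEdge [DecidableEq V] (a : Schema P V O) (s : Set (Atom P V O))
    (v v' : V × O) : Prop :=
  v.1 ∈ a.vars ∧ v'.1 ∈ a.vars ∧
  (v.1 = v'.1 → v.2 = v'.2) ∧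
  (∀ p ∈ a.prePos, ∃ q ∈ s, (p.subst (pairSub v v')).Matches q) ∧
  (∀ p ∈ a.preNeg, p.subst (pairSub v v') ∉ s)

/-- The vertex set `{x/ρ(x) | x ∈ X(a)}` (exactly one vertex per variable of `a`)
is a `k`-clique of the substitution consistency graph `G_{a,s}`. -/
def IsCliqueOf [DecidableEq V] (a : Schema P V O) (s : Set (Atom P V O))
    (ρ : V → O) : Prop :=
  ∀ x ∈ a.vars, ∀ x' ∈ a.vars, x ≠ x' → consistentEdge a s (x, ρ x) (x', ρ x')

/-- All ground precondition (resp. body) literals obtained by applying `ρ` hold in `s`: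
positive ground atoms are in `s`, negative ground atoms are not in `s`. -/
def Applicable (a : Schema P V O) (s : Set (Atom P V O)) (ρ : V → O) : Prop :=
  (∀ p ∈ a.prePos, p.ground ρ ∈ s) ∧ (∀ p ∈ a.preNeg, p.ground ρ ∉ s)

/-- A Datalog rule: a head atom and a body (a set of positive and negative literals
over the rule's variables). -/
structure Rule (P V O : Type) : Type where
  head : Atom P V O
  body : Schema P V O

section Aux
variable {P V O : Type} [DecidableEq V]

lemma Atom.mem_vars {p : Atom P V O} {v : V} :
    v ∈ p.vars ↔ Term.var v ∈ p.args := by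
  simp only [Atom.vars, List.mem_toFinset, List.mem_filterMap]
  constructor
  · rintro ⟨t, ht, h⟩
    cases t with
    | var w => simp at h; subst h; exact ht
    | obj o => simp at h
  · intro h; exact ⟨Term.var v, h, rfl⟩

lemma subst_eq_ground {σ : V → Option O} {ρ : V → O} (p : Atom P V O)
    (h : ∀ v ∈ p.vars, σ v = some (ρ v)) : p.subst σ = p.ground ρ := by
  unfold Atom.subst Atom.ground Atom.subst
  congr 1
  apply List.map_congr_left
  intro t ht
  cases t with
  | var v =>
    have := h v (Atom.mem_vars.mpr ht)
    simp [Term.subst, this]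
  | obj o => simp [Term.subst]

lemma matches_ground {σ : V → Option O} {ρ : V → O}
    (hσ : ∀ v, σ v = none ∨ σ v = some (ρ v)) (p : Atom P V O) :
    (p.subst σ).Matches (p.ground ρ) := by
  refine ⟨rfl, ?_⟩
  simp only [Atom.subst, Atom.ground]
  rw [List.forall₂_map_right_iff, List.forall₂_map_left_iff]
  apply List.forall₂_same.mpr
  intro t ht
  cases t with
  | var v =>
    rcases hσ v with h | h <;> simp [Term.subst, h, Term.Matches]
  | obj o => simp [Term.subst, Term.Matches]

lemma ground_matches_eq {p q : Atom P V O}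
    (hp : p.isGround) (hq : q.isGround) (h : p.Matches q) : p = q := by
  obtain ⟨hpred, hargs⟩ := h
  cases p with
  | mk pp pa =>
    cases q with
    | mk qp qa =>
      simp only at hpred hargs ⊢
      subst hpred
      congr 1
      induction hargs with
      | nil => rfl
      | cons hm _ ih =>
        rename_i t u l l' _
        have ht : t.isObj := hp t (by simp)
        have hu : u.isObj := hq u (by simp)
        cases t with
        | var v => exact absurd ht (by simp [Term.isObj])
        | obj o =>
          cases u with
          | var w => exact absurd hu (by simp [Term.isObj])
          | obj o' =>
            have : o = o' := hm
            subst this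
            have := ih (fun t ht => hp t (by simp [ht]))
              (fun t ht => hq t (by simp [ht]))
            simp [this]

lemma ground_isGround (ρ : V → O) (p : Atom P V O) :
    (p.ground ρ).isGround := by
  intro t ht
  simp only [Atom.ground, Atom.subst, List.mem_map] at ht
  obtain ⟨u, _, rfl⟩ := ht
  cases u <;> simp [Term.subst, Term.isObj]

lemma pairSub_le (ρ : V → O) (x x' : V) (v : V) :
    pairSub (x, ρ x) (x', ρ x') v = none ∨
      pairSub (x, ρ x) (x', ρ x') v = some (ρ v) := by
  unfold pairSub
  by_cases h1 : v = x
  · subst h1; simp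
  · by_cases h2 : v = x'
    · subst h2; simp [h1]
    · simp [h1, h2]

lemma subst_ground_of_mem {σ : V → Option O} {p : Atom P V O}
    (h : (p.subst σ).isGround) : ∀ v ∈ p.vars, σ v ≠ none := by
  intro v hv hnone
  have hmem : Term.var v ∈ p.args := Atom.mem_vars.mp hv
  have : Term.subst σ (Term.var v) ∈ (p.subst σ).args := by
    simp only [Atom.subst, List.mem_map]; exact ⟨_, hmem, rfl⟩
  have := h _ this
  simp [Term.subst, hnone, Term.isObj] at this

end Aux

end Planning

open Planning in
/-- Theorem 1 of the paper.
Let `a` be an action schema with arity `k ≥ 2` all of whose precondition literals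
have arity at most `2`, and let `s` be a state (a set of ground atoms, with all
precondition variables among `X(a)`). Then for every substitution `ρ`, the vertex
set `{x/ρ(x) | x ∈ X(a)}` (exactly one vertex per variable of `a`) is a `k`-clique
of the substitution consistency graph `G_{a,s}` iff all ground literals
`ℓ[ρ]` with `ℓ ∈ pre(a)` hold in `s`. -/
theorem exists_clique_iff_all_ground_literals_hold
    {P V O : Type} [DecidableEq V]
    (a : Schema P V O) (s : Set (Atom P V O))
    (hground : ∀ q ∈ s, q.isGround)
    (hprevars : ∀ p ∈ a.prePos ∪ a.preNeg, p.vars ⊆ a.vars)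
    (hk : 2 ≤ a.arity)
    (harity : ∀ p ∈ a.prePos ∪ a.preNeg, p.vars.card ≤ 2)
    (ρ : V → O) :
    IsCliqueOf a s ρ ↔ Applicable a s ρ := by
  constructor
  · intro hcl
    have hpick : ∀ p ∈ a.prePos ∪ a.preNeg,
        ∃ x x', x ∈ a.vars ∧ x' ∈ a.vars ∧ x ≠ x' ∧ p.vars ⊆ {x, x'} := by
      intro p hp
      obtain ⟨u, hsu, hua, hcard⟩ :=
        Finset.exists_subsuperset_card_eq (hprevars p hp) (harity p hp) hk
      obtain ⟨x, x', hne, rfl⟩ := Finset.card_eq_two.mp hcard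
      exact ⟨x, x', hua (by simp), hua (by simp), hne, hsu⟩
    have key : ∀ p ∈ a.prePos ∪ a.preNeg,
        ∃ x x', x ∈ a.vars ∧ x' ∈ a.vars ∧ x ≠ x' ∧
          p.subst (pairSub (x, ρ x) (x', ρ x')) = p.ground ρ := by
      intro p hp
      obtain ⟨x, x', hx, hx', hne, hsub⟩ := hpick p hp
      refine ⟨x, x', hx, hx', hne, subst_eq_ground p ?_⟩
      intro v hv
      have hv2 : v = x ∨ v = x' := by simpa using hsub hv
      rcases (pairSub_le ρ x x' v) with h | h
      · exfalso
        unfold pairSub at h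
        rcases hv2 with rfl | rfl <;> split_ifs at h <;> simp_all
      · exact h
    constructor
    · intro p hp
      obtain ⟨x, x', hx, hx', hne, heq⟩ := key p (Set.mem_union_left _ hp)
      obtain ⟨q, hq, hm⟩ := (hcl x hx x' hx' hne).2.2.2.1 p hp
      rw [heq] at hm
      rwa [ground_matches_eq (ground_isGround ρ p) (hground q hq) hm]
    · intro p hp
      obtain ⟨x, x', hx, hx', hne, heq⟩ := key p (Set.mem_union_right _ hp)
      have := (hcl x hx x' hx' hne).2.2.2.2 p hp
      rwa [heq] at this
  · intro happ x hx x' hx' hne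
    refine ⟨hx, hx', fun h => absurd h hne, ?_, ?_⟩
    · intro p hp
      exact ⟨p.ground ρ, happ.1 p hp, matches_ground (pairSub_le ρ x x') p⟩
    · intro p hp hmem
      have hg := hground _ hmem
      have hall : ∀ v ∈ p.vars, pairSub (x, ρ x) (x', ρ x') v = some (ρ v) :=
        fun v hv => (pairSub_le ρ x x' v).resolve_left (subst_ground_of_mem hg v hv)
      rw [subst_eq_ground p hall] at hmem
      exact happ.2 p hp hmem
end

section
/- Let a be an action schema and s a state, and let x, x' be two distinct variables of a such that no precondition literal of a mentions both x and x' (i.e., {x,x'} is not an edge of the variable dependency graph G_a of a). If x/o and x'/o' are both vertices of the substitution consistency graph G_{a,s} (vertex-consistent), then {x/o, x'/o'} is an edge of G_{a,s} (edge-consistent). -/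
open Planning in
theorem Planning.Atom.subst_congr {P V O : Type} [DecidableEq V]
    (p : Atom P V O) (σ τ : V → Option O)
    (h : ∀ v ∈ p.vars, σ v = τ v) : p.subst σ = p.subst τ := by
  unfold Atom.subst
  congr 1
  apply List.map_congr_left
  intro t ht
  cases t with
  | obj o => rfl
  | var v =>
    have hv : v ∈ p.vars := by
      simp only [Atom.vars, List.mem_toFinset, List.mem_filterMap]
      exact ⟨Term.var v, ht, rfl⟩
    simp [Term.subst, h v hv]

open Planning in
/-- Let `a` be an action schema, `s` a state (set of ground
atoms), and `x ≠ x'` two variables of `a` such that no precondition literal of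
`a` mentions both `x` and `x'` (i.e. `{x, x'}` is not an edge of the variable
dependency graph `G_a`). If `x/o` and `x'/o'` are both vertices of the
substitution consistency graph `G_{a,s}` (vertex-consistent), then
`{x/o, x'/o'}` is an edge of `G_{a,s}` (edge-consistent). -/
theorem vertex_consistent_of_independent_implies_edge_consistent
    {P V O : Type} [DecidableEq V]
    (a : Schema P V O) (s : Set (Atom P V O))
    (hground : ∀ q ∈ s, q.isGround)
    {x x' : V} (hx : x ∈ a.vars) (hx' : x' ∈ a.vars) (hne : x ≠ x')
    (hnodep : ∀ p ∈ a.prePos ∪ a.preNeg, ¬ (x ∈ p.vars ∧ x' ∈ p.vars))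
    {o o' : O}
    (hv : consistentVertex a s (x, o))
    (hv' : consistentVertex a s (x', o')) :
    consistentEdge a s (x, o) (x', o') := by
  obtain ⟨_, hpos, hneg⟩ := hv
  obtain ⟨_, hpos', hneg'⟩ := hv'
  have key : ∀ p : Atom P V O, p ∈ a.prePos ∪ a.preNeg →
      p.subst (pairSub (x, o) (x', o')) = p.subst (singleSub (x, o)) ∨
      p.subst (pairSub (x, o) (x', o')) = p.subst (singleSub (x', o')) := by
    intro p hp
    have hd := hnodep p hp
    by_cases hxp : x' ∈ p.vars
    · right
      apply Atom.subst_congr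
      intro v hvp
      have hvx : v ≠ x := by rintro rfl; exact hd ⟨hvp, hxp⟩
      simp [pairSub, singleSub, hvx]
    · left
      apply Atom.subst_congr
      intro v hvp
      have hvx : v ≠ x' := by rintro rfl; exact hxp hvp
      simp [pairSub, singleSub, hvx]
  refine ⟨hx, hx', fun h => absurd h hne, ?_, ?_⟩
  · intro p hp
    rcases key p (Or.inl hp) with h | h
    · rw [h]; exact hpos p hp
    · rw [h]; exact hpos' p hp
  · intro p hp
    rcases key p (Or.inr hp) with h | h
    · rw [h]; exact hneg p hp
    · rw [h]; exact hneg' p hp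
end
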